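/- arXiv:2208.08782 — 2 statements merged into one kernel-verified Lean document; each statement's English description precedes it below -/
import Mathlib

section
/- 1/2-MMS allocations always exist: for every instance with n agents and additive valuations there exists an allocation A such that v_i(A_i) ≥ (1/2) · μ_i^n(M) for every agent i, where μ_i^n(M) is agent i's maximin share. -/
/-!
If some agent `i` values a single good `g` at least half her maximin share, give `g` to `i`:
deleting one good and one agent does not lower the maximin share of anybody else, since
dropping the bundle that contains `g` from an optimal partition leaves one bundle per
remaining agent. Otherwise every good is small for everybody, and bag filling works: a
smallest bag of goods worth half her share to some agent is worth less than the full share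
to every agent, so after handing it out each remaining agent still values the remaining
goods at least at one share per remaining agent.
-/

open Finset

/-- The maximin share `μ^k(S)` of an agent with additive valuation `v`: the maximum over
all partitions of `S` into `k` pairwise disjoint bundles of the minimum bundle value. -/
noncomputable def maximinShare {G : Type*} [DecidableEq G] (v : G → ℝ) (k : ℕ)
    (S : Finset G) : ℝ :=
  sSup {x : ℝ | ∃ B : Fin k → Finset G,
    (∀ i j, i ≠ j → Disjoint (B i) (B j)) ∧
    Finset.univ.biUnion B = S ∧
    x = ⨅ j : Fin k, ∑ g ∈ B j, v g}

section PartialAllocation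

variable {ι G : Type*} [DecidableEq G]

def IsPartialAllocation (s : Finset ι) (A : ι → Finset G) (S : Finset G) : Prop :=
  (s : Set ι).PairwiseDisjoint A ∧ s.biUnion A ⊆ S

lemma isPartialAllocation_empty (s : Finset ι) (S : Finset G) :
    IsPartialAllocation s (fun _ => ∅) S :=
  ⟨fun _ _ _ _ _ => disjoint_bot_left, by simp⟩

lemma IsPartialAllocation.subset {s : Finset ι} {A : ι → Finset G} {S : Finset G}
    (h : IsPartialAllocation s A S) {i : ι} (hi : i ∈ s) : A i ⊆ S :=
  (subset_biUnion_of_mem A hi).trans h.2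

lemma IsPartialAllocation.update [DecidableEq ι] {s : Finset ι} {A : ι → Finset G}
    {S T : Finset G} {i : ι} (hi : i ∉ s) (h : IsPartialAllocation s A (S \ T)) (hT : T ⊆ S) :
    IsPartialAllocation (insert i s) (Function.update A i T) S := by
  have hA : ∀ j ∈ s, Function.update A i T j = A j := fun j hj =>
    Function.update_of_ne (ne_of_mem_of_not_mem hj hi) _ _
  refine ⟨?_, ?_⟩
  · rw [coe_insert, Set.pairwiseDisjoint_insert_of_notMem hi]
    refine ⟨h.1.mono_on fun j hj => (hA j hj).le, fun j hj => ?_⟩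
    rw [Function.update_self, hA j hj]
    exact disjoint_sdiff.mono_right (h.subset hj)
  · rw [biUnion_insert, Function.update_self, biUnion_congr rfl hA]
    exact union_subset hT (h.2.trans sdiff_subset)

lemma IsPartialAllocation.exists_cover [Fintype ι] [DecidableEq ι] {A : ι → Finset G}
    {S : Finset G} (h : IsPartialAllocation univ A S) (i : ι) :
    ∃ B : ι → Finset G, (∀ j k, j ≠ k → Disjoint (B j) (B k)) ∧ univ.biUnion B = S ∧
      ∀ j, A j ⊆ B j := by
  set L := S \ univ.biUnion A
  have hL : ∀ j, Disjoint L (A j) := fun j =>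
    disjoint_sdiff_self_left.mono_right (subset_biUnion_of_mem A (mem_univ j))
  have hd : ∀ j k, j ≠ k → Disjoint (A j) (A k) := fun j k hjk =>
    h.1 (mem_univ j) (mem_univ k) hjk
  refine ⟨Function.update A i (A i ∪ L), fun j k hjk => ?_, ?_, fun j => ?_⟩
  · rcases eq_or_ne j i with rfl | hj
    · rw [Function.update_self, Function.update_of_ne hjk.symm]
      exact disjoint_union_left.2 ⟨hd j k hjk, hL k⟩
    rcases eq_or_ne k i with rfl | hk
    · rw [Function.update_self, Function.update_of_ne hj]
      exact disjoint_union_right.2 ⟨hd j k hjk, (hL j).symm⟩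
    · rw [Function.update_of_ne hj, Function.update_of_ne hk]
      exact hd j k hjk
  · refine subset_antisymm (biUnion_subset.2 fun j _ => ?_) fun x hx => ?_
    · rcases eq_or_ne j i with rfl | hj
      · rw [Function.update_self]
        exact union_subset (h.subset (mem_univ j)) sdiff_subset
      · rw [Function.update_of_ne hj]
        exact h.subset (mem_univ j)
    · by_cases hxA : x ∈ univ.biUnion A
      · obtain ⟨j, -, hxj⟩ := mem_biUnion.1 hxA
        rcases eq_or_ne j i with rfl | hj
        · exact mem_biUnion.2 ⟨j, mem_univ j, by simp [hxj]⟩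
        · exact mem_biUnion.2 ⟨j, mem_univ j, by rwa [Function.update_of_ne hj]⟩
      · exact mem_biUnion.2 ⟨i, mem_univ i, by simp [L, hx, hxA]⟩
  · rcases eq_or_ne j i with rfl | hj
    · simp
    · rw [Function.update_of_ne hj]

end PartialAllocation

section MaximinShare

variable {G : Type*} [DecidableEq G] (v : G → ℝ) {k : ℕ} (S : Finset G)

lemma maximinShare_set_finite (k : ℕ) :
    {x : ℝ | ∃ B : Fin k → Finset G, (∀ i j, i ≠ j → Disjoint (B i) (B j)) ∧
      univ.biUnion B = S ∧ x = ⨅ j, ∑ g ∈ B j, v g}.Finite := by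
  refine (Set.finite_range fun B : Fin k → S.powerset => ⨅ j, ∑ g ∈ (B j : Finset G), v g).subset ?_
  rintro x ⟨B, -, hB, rfl⟩
  exact ⟨fun j => ⟨B j, mem_powerset.2 (hB ▸ subset_biUnion_of_mem B (mem_univ j))⟩, rfl⟩

lemma le_maximinShare_of_isPartialAllocation (hv : ∀ g, 0 ≤ v g) (hk : 0 < k)
    {B : Fin k → Finset G} (hB : IsPartialAllocation univ B S) {x : ℝ}
    (hx : ∀ j, x ≤ ∑ g ∈ B j, v g) : x ≤ maximinShare v k S := by
  obtain ⟨B', hd, hU, hsub⟩ := hB.exists_cover ⟨0, hk⟩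
  have : Nonempty (Fin k) := ⟨⟨0, hk⟩⟩
  calc x ≤ ⨅ j, ∑ g ∈ B' j, v g := le_ciInf fun j =>
        (hx j).trans (sum_le_sum_of_subset_of_nonneg (hsub j) fun g _ _ => hv g)
    _ ≤ maximinShare v k S :=
        le_csSup (maximinShare_set_finite v S k).bddAbove ⟨B', hd, hU, rfl⟩

lemma maximinShare_nonneg (hv : ∀ g, 0 ≤ v g) (hk : 0 < k) : 0 ≤ maximinShare v k S :=
  le_maximinShare_of_isPartialAllocation v S hv hk (isPartialAllocation_empty _ _) (by simp)

lemma exists_partition_maximinShare_le (hk : 0 < k) :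
    ∃ B : Fin k → Finset G, (∀ i j, i ≠ j → Disjoint (B i) (B j)) ∧ univ.biUnion B = S ∧
      ∀ j, maximinShare v k S ≤ ∑ g ∈ B j, v g := by
  obtain ⟨B, hd, hU, -⟩ := (isPartialAllocation_empty univ S).exists_cover (⟨0, hk⟩ : Fin k)
  obtain ⟨B, hd, hU, hB⟩ :=
    Set.Nonempty.csSup_mem (by exact ⟨_, B, hd, hU, rfl⟩) (maximinShare_set_finite v S k)
  refine ⟨B, hd, hU, fun j => ?_⟩
  rw [maximinShare, hB]
  exact ciInf_le (Set.finite_range _).bddBelow j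

lemma card_mul_maximinShare_le (hk : 0 < k) : k * maximinShare v k S ≤ ∑ g ∈ S, v g := by
  obtain ⟨B, hd, hU, hB⟩ := exists_partition_maximinShare_le v S hk
  calc k * maximinShare v k S = ∑ _j : Fin k, maximinShare v k S := by simp
    _ ≤ ∑ j, ∑ g ∈ B j, v g := sum_le_sum fun j _ => hB j
    _ = ∑ g ∈ S, v g := by rw [← hU, sum_biUnion fun i _ j _ hij => hd i j hij]

lemma maximinShare_succ_le_erase (hv : ∀ g, 0 ≤ v g) (hk : 0 < k) {g : G} (hg : g ∈ S) :
    maximinShare v (k + 1) S ≤ maximinShare v k (S.erase g) := by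
  obtain ⟨B, hd, hU, hB⟩ := exists_partition_maximinShare_le v S k.succ_pos
  obtain ⟨j₀, -, hgj₀⟩ := mem_biUnion.1 (hU ▸ hg)
  refine le_maximinShare_of_isPartialAllocation v _ hv hk (B := B ∘ j₀.succAbove)
    ⟨fun a _ b _ hab => hd _ _ (Fin.succAbove_right_injective.ne hab), fun x hx => ?_⟩
    fun j => hB _
  obtain ⟨j, -, hxj⟩ := mem_biUnion.1 hx
  refine mem_erase.2 ⟨?_, hU ▸ mem_biUnion.2 ⟨_, mem_univ _, hxj⟩⟩
  rintro rfl
  exact disjoint_left.1 (hd _ _ (Fin.succAbove_ne j₀ j)) hxj hgj₀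

end MaximinShare

section Existence

variable {ι G : Type*} [DecidableEq G]

lemma exists_bag_of_small_goods {s : Finset ι} {R : Finset G} {v : ι → G → ℝ} {μ : ι → ℝ}
    (hμ : ∀ i ∈ s, 0 ≤ μ i) (hsmall : ∀ i ∈ s, ∀ g ∈ R, v i g ≤ μ i / 2)
    {i₀ : ι} (hi₀ : i₀ ∈ s) (hR : μ i₀ / 2 ≤ ∑ g ∈ R, v i₀ g) :
    ∃ T ⊆ R, ∃ i ∈ s, μ i / 2 ≤ ∑ g ∈ T, v i g ∧ ∀ j ∈ s, ∑ g ∈ T, v j g ≤ μ j := by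
  classical
  obtain ⟨T, hT, hmin⟩ := exists_min_image
    (R.powerset.filter fun T => ∃ i ∈ s, μ i / 2 ≤ ∑ g ∈ T, v i g) card
    ⟨R, mem_filter.2 ⟨mem_powerset_self R, i₀, hi₀, hR⟩⟩
  obtain ⟨hTR, i, hi, hiT⟩ := mem_filter.1 hT
  rw [mem_powerset] at hTR
  refine ⟨T, hTR, i, hi, hiT, fun j hj => ?_⟩
  rcases T.eq_empty_or_nonempty with rfl | ⟨g, hg⟩
  · simpa using hμ j hj
  have hlt : ∑ x ∈ T.erase g, v j x < μ j / 2 := by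
    by_contra! hge
    have hTg := hmin (T.erase g) (mem_filter.2
      ⟨mem_powerset.2 ((erase_subset g T).trans hTR), j, hj, hge⟩)
    exact (card_erase_lt_of_mem hg).not_ge hTg
  rw [← add_sum_erase T _ hg]
  linarith [hsmall j hj g (hTR hg)]

theorem exists_partialAllocation_half_le_of_small_goods [DecidableEq ι] (v : ι → G → ℝ)
    (μ : ι → ℝ) (s : Finset ι) (R : Finset G) (hμ : ∀ i ∈ s, 0 ≤ μ i)
    (hsmall : ∀ i ∈ s, ∀ g ∈ R, v i g ≤ μ i / 2) (htot : ∀ i ∈ s, #s * μ i ≤ ∑ g ∈ R, v i g) :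
    ∃ A, IsPartialAllocation s A R ∧ ∀ i ∈ s, μ i / 2 ≤ ∑ g ∈ A i, v i g := by
  induction s using Finset.strongInduction generalizing R with
  | H s ih =>
  rcases s.eq_empty_or_nonempty with rfl | ⟨i₀, hi₀⟩
  · exact ⟨_, isPartialAllocation_empty _ R, by simp⟩
  have hR : μ i₀ / 2 ≤ ∑ g ∈ R, v i₀ g := by
    have hs : (1 : ℝ) ≤ #s := by exact_mod_cast card_pos.2 ⟨i₀, hi₀⟩
    nlinarith [hμ i₀ hi₀, htot i₀ hi₀]
  obtain ⟨T, hTR, i, hi, hiT, hT⟩ := exists_bag_of_small_goods hμ hsmall hi₀ hR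
  have hcard : (#(s.erase i) : ℝ) + 1 = #s := by exact_mod_cast card_erase_add_one hi
  obtain ⟨A, hA, hval⟩ := ih (s.erase i) (erase_ssubset hi) (R \ T)
    (fun j hj => hμ j (mem_of_mem_erase hj))
    (fun j hj g hg => hsmall j (mem_of_mem_erase hj) g (mem_sdiff.1 hg).1)
    (fun j hj => by
      have hj := mem_of_mem_erase hj
      have hsplit := sum_sdiff hTR (f := v j)
      have htot_j := htot j hj
      rw [← hcard, add_mul, one_mul] at htot_j
      linarith [hT j hj])
  refine ⟨Function.update A i T, insert_erase hi ▸ hA.update (notMem_erase i s) hTR,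
    fun j hj => ?_⟩
  rcases eq_or_ne j i with rfl | hji
  · rwa [Function.update_self]
  · rw [Function.update_of_ne hji]
    exact hval j (mem_erase.2 ⟨hji, hj⟩)

theorem exists_partialAllocation_half_maximinShare_le [DecidableEq ι] (v : ι → G → ℝ)
    (hv : ∀ i g, 0 ≤ v i g) (s : Finset ι) (S : Finset G) :
    ∃ A, IsPartialAllocation s A S ∧
      ∀ i ∈ s, maximinShare (v i) #s S / 2 ≤ ∑ g ∈ A i, v i g := by
  induction s using Finset.strongInduction generalizing S with
  | H s ih =>
  by_cases hbig : ∃ i ∈ s, ∃ g ∈ S, maximinShare (v i) #s S / 2 ≤ v i g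
  · obtain ⟨i, hi, g, hg, hig⟩ := hbig
    obtain ⟨A, hA, hval⟩ := ih (s.erase i) (erase_ssubset hi) (S.erase g)
    rw [erase_eq S g] at hA
    refine ⟨Function.update A i {g},
      insert_erase hi ▸ hA.update (notMem_erase i s) (singleton_subset_iff.2 hg), fun j hj => ?_⟩
    rcases eq_or_ne j i with rfl | hji
    · rwa [Function.update_self, sum_singleton]
    · have hj' : j ∈ s.erase i := mem_erase.2 ⟨hji, hj⟩
      rw [Function.update_of_ne hji]
      refine le_trans ?_ (hval j hj')
      rw [← card_erase_add_one hi]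
      gcongr
      exact maximinShare_succ_le_erase (v j) S (hv j) (card_pos.2 ⟨j, hj'⟩) hg
  · push Not at hbig
    exact exists_partialAllocation_half_le_of_small_goods v _ s S
      (fun i hi => maximinShare_nonneg (v i) S (hv i) (card_pos.2 ⟨i, hi⟩))
      (fun i hi g hg => (hbig i hi g hg).le)
      (fun i hi => card_mul_maximinShare_le (v i) S (card_pos.2 ⟨i, hi⟩))

end Existence

/-- 1/2-MMS allocations always exist: for every instance with `n > 0` agents
and additive valuations there exists an allocation giving every agent at least half of her
maximin share. -/
theorem half_mms_exists {n : ℕ} (hn : 0 < n) {G : Type*} [DecidableEq G]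
    (M : Finset G) (v : Fin n → G → ℝ) (hv : ∀ i g, 0 ≤ v i g) :
    ∃ A : Fin n → Finset G,
      (∀ i j, i ≠ j → Disjoint (A i) (A j)) ∧
      Finset.univ.biUnion A = M ∧
      ∀ i : Fin n, (1 / 2) * maximinShare (v i) n M ≤ ∑ g ∈ A i, v i g := by
  obtain ⟨A, hA, hval⟩ := exists_partialAllocation_half_maximinShare_le v hv univ M
  obtain ⟨B, hd, hU, hAB⟩ := hA.exists_cover ⟨0, hn⟩
  refine ⟨B, hd, hU, fun i => ?_⟩
  calc 1 / 2 * maximinShare (v i) n M = maximinShare (v i) #(univ : Finset (Fin n)) M / 2 := by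
        rw [card_univ, Fintype.card_fin, one_div_mul_eq_div]
    _ ≤ ∑ g ∈ A i, v i g := hval i (mem_univ i)
    _ ≤ ∑ g ∈ B i, v i g := sum_le_sum_of_subset_of_nonneg (hAB i) fun g _ _ => hv i g
end

section
/- EQ1 and PO can be incompatible: in the instance with three agents and six goods where agent a_1 values g_1, g_2, g_3 at 1 each and g_4, g_5, g_6 at 0, while agents a_2 and a_3 each value g_1, g_2, g_3 at 0 and g_4, g_5, g_6 at 1 each (all valuations additive), there is no allocation that is simultaneously equitable up to one good (EQ1) and Pareto optimal (PO). -/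
open Finset

/-- The valuations of the three agents over the six goods: agent 1 values the first three
goods at 1 each, agents 2 and 3 value the last three goods at 1 each. -/
noncomputable def vEQ : Fin 3 → Fin 6 → ℝ :=
  ![![1, 1, 1, 0, 0, 0], ![0, 0, 0, 1, 1, 1], ![0, 0, 0, 1, 1, 1]]

/-!
Pareto optimality forces agent 1 to hold all three goods she values, since nobody else
values them. Her bundle is then worth 3 to her, and still at least 2 after removing any good,
so EQ1 demands that agents 2 and 3 each get value at least 2. But they have the same
valuation and only 3 units of value to share.
-/

section GiveTo

variable {ι α : Type*} [DecidableEq ι] [DecidableEq α]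

def giveTo (A : ι → Finset α) (g : α) (k : ι) : ι → Finset α :=
  fun i => if i = k then insert g (A i) else (A i).erase g

@[simp]
lemma giveTo_self (A : ι → Finset α) (g : α) (k : ι) : giveTo A g k k = insert g (A k) :=
  if_pos rfl

lemma giveTo_of_ne (A : ι → Finset α) (g : α) {i k : ι} (hi : i ≠ k) :
    giveTo A g k i = (A i).erase g :=
  if_neg hi

end GiveTo

section Allocation

variable {ι α : Type*} [Fintype ι] [Fintype α] [DecidableEq α]

def IsAllocation (A : ι → Finset α) : Prop :=
  (∀ i j, i ≠ j → Disjoint (A i) (A j)) ∧ univ.biUnion A = univ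

def IsParetoImprovement (v : ι → α → ℝ) (A B : ι → Finset α) : Prop :=
  (∀ i, ∑ g ∈ A i, v i g ≤ ∑ g ∈ B i, v i g) ∧ ∃ j, ∑ g ∈ A j, v j g < ∑ g ∈ B j, v j g

def IsParetoOptimal (v : ι → α → ℝ) (A : ι → Finset α) : Prop :=
  ¬ ∃ B, IsAllocation B ∧ IsParetoImprovement v A B

lemma IsAllocation.exists_mem {A : ι → Finset α} (hA : IsAllocation A) (x : α) :
    ∃ i, x ∈ A i := by
  have hx : x ∈ univ.biUnion A := hA.2 ▸ mem_univ x
  simpa using hx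

variable [DecidableEq ι]

lemma IsAllocation.giveTo {A : ι → Finset α} (hA : IsAllocation A) (g : α) (k : ι) :
    IsAllocation (giveTo A g k) := by
  refine ⟨fun i j hij => ?_, eq_univ_iff_forall.2 fun x => mem_biUnion.2 ?_⟩
  · have hdisj := hA.1 i j hij
    unfold _root_.giveTo
    split_ifs with hi hj hj
    · exact absurd (hi.trans hj.symm) hij
    · exact disjoint_insert_left.2 ⟨notMem_erase g _, hdisj.mono_right (erase_subset g _)⟩
    · exact disjoint_insert_right.2 ⟨notMem_erase g _, hdisj.mono_left (erase_subset g _)⟩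
    · exact hdisj.mono (erase_subset g _) (erase_subset g _)
  · obtain ⟨i, hi⟩ := hA.exists_mem x
    by_cases hx : x = g
    · exact ⟨k, mem_univ k, by simp [_root_.giveTo, hx]⟩
    · refine ⟨i, mem_univ i, ?_⟩
      unfold _root_.giveTo
      split_ifs
      · exact mem_insert_of_mem hi
      · exact mem_erase.2 ⟨hx, hi⟩

lemma IsParetoOptimal.mem_of_forall_ne_eq_zero {v : ι → α → ℝ} {A : ι → Finset α}
    (hA : IsAllocation A) (hPO : IsParetoOptimal v A) {g : α} {k : ι} (hk : 0 < v k g)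
    (hothers : ∀ i ≠ k, v i g = 0) : g ∈ A k := by
  by_contra hg
  have hgain : ∑ x ∈ A k, v k x < ∑ x ∈ giveTo A g k k, v k x := by
    rw [giveTo_self, sum_insert hg]
    linarith
  refine hPO ⟨giveTo A g k, hA.giveTo g k, fun i => ?_, k, hgain⟩
  by_cases hi : i = k
  · subst hi
    exact hgain.le
  · rw [giveTo_of_ne A g hi, sum_erase _ (hothers i hi)]

end Allocation

lemma sum_add_sum_le_sum_univ {α : Type*} [Fintype α] [DecidableEq α] {f : α → ℝ}
    (hf : ∀ x, 0 ≤ f x) {s t : Finset α} (hst : Disjoint s t) :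
    ∑ x ∈ s, f x + ∑ x ∈ t, f x ≤ ∑ x, f x := by
  rw [← sum_union hst]
  exact sum_le_univ_sum_of_nonneg hf

lemma vEQ_zero_apply_le_one (g : Fin 6) : vEQ 0 g ≤ 1 := by
  fin_cases g <;> norm_num [vEQ]

lemma vEQ_zero_apply_of_lt {g : Fin 6} (hg : g < 3) : vEQ 0 g = 1 := by
  fin_cases g <;> simp_all [vEQ]

lemma vEQ_apply_of_lt {i : Fin 3} (hi : i ≠ 0) {g : Fin 6} (hg : g < 3) : vEQ i g = 0 := by
  fin_cases i <;> fin_cases g <;> simp_all [vEQ]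

lemma vEQ_nonneg (i : Fin 3) (g : Fin 6) : 0 ≤ vEQ i g := by
  fin_cases i <;> fin_cases g <;> norm_num [vEQ]

lemma vEQ_two : vEQ 2 = vEQ 1 := rfl

lemma sum_vEQ_one : ∑ g, vEQ 1 g = 3 := by
  simp [vEQ, Fin.sum_univ_six]
  norm_num

lemma three_le_sum_vEQ_zero {S : Finset (Fin 6)} (hS : ∀ g : Fin 6, g < 3 → g ∈ S) :
    3 ≤ ∑ x ∈ S, vEQ 0 x :=
  calc (3 : ℝ) = ∑ x ∈ Iio 3, vEQ 0 x := by
        rw [sum_congr rfl fun g hg => vEQ_zero_apply_of_lt (mem_Iio.1 hg)]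
        simp
    _ ≤ ∑ x ∈ S, vEQ 0 x :=
        sum_le_sum_of_subset_of_nonneg (fun g hg => hS g (mem_Iio.1 hg))
          fun g _ _ => vEQ_nonneg 0 g

/-- EQ1 and PO can be incompatible: in this instance there is no allocation
that is simultaneously equitable up to one good (EQ1) and Pareto optimal (PO). -/
theorem no_eq1_and_po :
    ¬ ∃ A : Fin 3 → Finset (Fin 6),
      ((∀ i j, i ≠ j → Disjoint (A i) (A j)) ∧ Finset.univ.biUnion A = Finset.univ) ∧
      -- EQ1
      (∀ i j : Fin 3, (A j).Nonempty →
        ∃ g ∈ A j, ∑ x ∈ (A j).erase g, vEQ j x ≤ ∑ x ∈ A i, vEQ i x) ∧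
      -- PO
      (¬ ∃ B : Fin 3 → Finset (Fin 6),
        ((∀ i j, i ≠ j → Disjoint (B i) (B j)) ∧ Finset.univ.biUnion B = Finset.univ) ∧
        (∀ i, ∑ g ∈ A i, vEQ i g ≤ ∑ g ∈ B i, vEQ i g) ∧
        (∃ j, ∑ g ∈ A j, vEQ j g < ∑ g ∈ B j, vEQ j g)) := by
  rintro ⟨A, hA, hEQ1, hPO⟩
  have hlow : ∀ g : Fin 6, g < 3 → g ∈ A 0 := fun g hg =>
    IsParetoOptimal.mem_of_forall_ne_eq_zero hA hPO (by rw [vEQ_zero_apply_of_lt hg]; norm_num)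
      fun i hi => vEQ_apply_of_lt hi hg
  have hthree := three_le_sum_vEQ_zero hlow
  have hge_two : ∀ i, 2 ≤ ∑ x ∈ A i, vEQ i x := fun i => by
    obtain ⟨g, hg, hle⟩ := hEQ1 i 0 ⟨0, hlow 0 (by decide)⟩
    rw [sum_erase_eq_sub hg] at hle
    linarith [vEQ_zero_apply_le_one g]
  have hshare : ∑ x ∈ A 1, vEQ 1 x + ∑ x ∈ A 2, vEQ 1 x ≤ 3 :=
    sum_vEQ_one ▸ sum_add_sum_le_sum_univ (vEQ_nonneg 1) (hA.1 1 2 (by decide))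
  linarith [hge_two 1, vEQ_two ▸ hge_two 2]
end
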